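/- arXiv:1301.6926 — 2 statements merged into one kernel-verified Lean document; each statement's English description precedes it below -/
import Mathlib

section
/- Let H be the gluing of (G,x,y) and (K,u,v), where G and K are cubic bridgeless graphs, xy ∈ E(G) and uv ∈ E(K). If the edge set of H can be covered by k perfect matchings, then the edge set of K can be covered by k perfect matchings; in particular χ'_e(K) ≤ χ'_e(H). -/
open SimpleGraph

/-- A graph is cubic (3-regular) if every vertex has exactly 3 neighbours. -/
def IsCubic {V : Type*} (G : SimpleGraph V) : Prop :=
  ∀ v : V, (G.neighborSet v).ncard = 3

/-- A graph is bridgeless if it has no cut-edge. -/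
def IsBridgeless {V : Type*} (G : SimpleGraph V) : Prop :=
  ∀ e : Sym2 V, ¬ G.IsBridge e

/-- The edge set of `G` can be covered by `k` perfect matchings. -/
def CoverByPM {V : Type*} (G : SimpleGraph V) (k : ℕ) : Prop :=
  ∃ M : Fin k → G.Subgraph,
    (∀ i, (M i).IsPerfectMatching) ∧ (⋃ i, (M i).edgeSet) = G.edgeSet

/-- The excessive index of `G`: the least number of perfect matchings needed to
cover the edge set of `G` (`⊤` if there is no such cover). -/
noncomputable def excessiveIndex {V : Type*} (G : SimpleGraph V) : ℕ∞ :=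
  sInf {k : ℕ∞ | ∃ n : ℕ, k = n ∧ CoverByPM G n}

/-- `G` has a proper edge colouring with `n` colours. -/
def ProperEdgeColorable {V : Type*} (G : SimpleGraph V) (n : ℕ) : Prop :=
  ∃ c : Sym2 V → Fin n, ∀ e ∈ G.edgeSet, ∀ f ∈ G.edgeSet,
    e ≠ f → (∃ v : V, v ∈ e ∧ v ∈ f) → c e ≠ c f

/-- The set of edges of `G` with one end-vertex in `A` and the other in `B`. -/
def edgesBetween {V : Type*} (G : SimpleGraph V) (A B : Set V) : Set (Sym2 V) :=
  {e | ∃ a b, G.Adj a b ∧ a ∈ A ∧ b ∈ B ∧ e = s(a, b)}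

/-- The set of edges of `G` with exactly one end-vertex in `A`. -/
def edgeBoundary {V : Type*} (G : SimpleGraph V) (A : Set V) : Set (Sym2 V) :=
  edgesBetween G A Aᶜ

/-- The subgraph induced on `A` contains a cycle. -/
def HasCycleOn {V : Type*} (G : SimpleGraph V) (A : Set V) : Prop :=
  ¬ (G.induce A).IsAcyclic

/-- `G` is cyclically `k`-edge-connected: there is no edge-cut with fewer than `k`
edges separating two parts each containing a cycle. -/
def CyclicallyEdgeConnected {V : Type*} (G : SimpleGraph V) (k : ℕ) : Prop :=
  ∀ A : Set V, HasCycleOn G A → HasCycleOn G Aᶜ → k ≤ (edgeBoundary G A).ncard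

/-- A snark: a cubic, cyclically 4-edge-connected graph of girth at least five
that is not 3-edge-colourable. -/
def IsSnark {V : Type*} (G : SimpleGraph V) : Prop :=
  IsCubic G ∧ CyclicallyEdgeConnected G 4 ∧ 5 ≤ G.girth ∧ ¬ ProperEdgeColorable G 3

/-- The gluing of `(G, x, y)` and `(H, u, v)`: remove the edges `x — y` and
`u — v`, and join `x` to `u` and `y` to `v`. -/
def gluing {V W : Type*} (G : SimpleGraph V) (H : SimpleGraph W) (x y : V) (u v : W) :
    SimpleGraph (V ⊕ W) :=
  SimpleGraph.fromRel (fun p q =>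
    (∃ a b : V, G.Adj a b ∧ s(a, b) ≠ s(x, y) ∧ p = Sum.inl a ∧ q = Sum.inl b) ∨
    (∃ a b : W, H.Adj a b ∧ s(a, b) ≠ s(u, v) ∧ p = Sum.inr a ∧ q = Sum.inr b) ∨
    (p = Sum.inl x ∧ q = Sum.inr u) ∨ (p = Sum.inl y ∧ q = Sum.inr v))

/-!
As `G` is cubic, it has an even number of vertices, so every perfect matching of the gluing
meets the 2-edge cut `{x — u, y — v}` in an even number of edges: both or neither. Restricting
such a matching to `K` and replacing the pair `x — u`, `y — v` by `u — v` gives a perfect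
matching of `K`. Applied to a cover of the gluing this gives a cover of `K`: every edge of `K`
other than `u — v` is an edge of the gluing, and `u — v` is covered wherever `x — u` is.
-/

open Sum

theorem IsCubic.even_card {V : Type*} [Fintype V] {G : SimpleGraph V} (hG : IsCubic G) :
    Even (Fintype.card V) := by
  classical
  have hdeg : ∀ v, G.degree v = 3 := fun v => by
    rw [← card_neighborSet_eq_degree, ← Nat.card_eq_fintype_card, Nat.card_coe_set_eq, hG v]
  simpa [hdeg, Nat.odd_iff] using G.even_card_odd_degree_vertices

namespace SimpleGraph.Subgraph.IsPerfectMatching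

variable {V W : Type*} [Finite V] {H : SimpleGraph (V ⊕ W)} {M : H.Subgraph}

/-- The vertices of `V` matched inside `V` carry a matching, so they are even in number;
so are the remaining ones, which are matched into `W`. -/
theorem even_ncard_inl_adj_inr (hV : Even (Nat.card V)) (hM : M.IsPerfectMatching) :
    Even {a : V | ∃ w, M.Adj (inl a) (inr w)}.ncard := by
  set S := {a : V | ∃ b, M.Adj (inl a) (inl b)}
  have hS : (M.induce (inl '' S)).IsMatching := by
    rintro _ ⟨a, ⟨b, hab⟩, rfl⟩
    refine ⟨inl b, ⟨Set.mem_image_of_mem _ ⟨b, hab⟩, Set.mem_image_of_mem _ ⟨a, hab.symm⟩,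
      hab⟩, fun z hz => hM.1.eq_of_adj_left hz.2.2 hab⟩
  have hS_even : Even S.ncard := by
    have : Fintype (M.induce (inl '' S)).verts := (Set.toFinite S |>.image inl).fintype
    have := hS.even_card
    rwa [← Set.ncard_eq_toFinset_card', induce_verts,
      Set.ncard_image_of_injective _ inl_injective] at this
  have hcompl : {a : V | ∃ w, M.Adj (inl a) (inr w)} = Sᶜ := by
    ext a
    obtain ⟨z, hz, -⟩ := isPerfectMatching_iff.mp hM (inl a)
    constructor
    · rintro ⟨w, hw⟩ ⟨b, hb⟩
      exact inl_ne_inr (hM.1.eq_of_adj_left hb hw)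
    · intro ha
      cases z with
      | inl b => exact absurd ⟨b, hz⟩ ha
      | inr w => exact ⟨w, hz⟩
  rw [hcompl, Set.ncard_compl]
  exact Nat.even_sub (Set.ncard_le_card S) |>.mpr (iff_of_true hV hS_even)

theorem adj_inl_inr_of_adj_inl_inr {x y : V} {u v : W} (hV : Even (Nat.card V))
    (hM : M.IsPerfectMatching) (hxy : x ≠ y)
    (hcross : ∀ a w, H.Adj (inl a) (inr w) → a = x ∧ w = u ∨ a = y ∧ w = v)
    (hxu : M.Adj (inl x) (inr u)) : M.Adj (inl y) (inr v) := by
  by_contra hyv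
  have hsingleton : {a : V | ∃ w, M.Adj (inl a) (inr w)} = {x} := by
    refine Set.eq_singleton_iff_unique_mem.mpr ⟨⟨u, hxu⟩, ?_⟩
    rintro a ⟨w, haw⟩
    rcases hcross a w (M.adj_sub haw) with ⟨rfl, -⟩ | ⟨rfl, rfl⟩
    · rfl
    · exact absurd haw hyv
  have := hM.even_ncard_inl_adj_inr hV
  rw [hsingleton, Set.ncard_singleton] at this
  exact Nat.not_even_one this

end SimpleGraph.Subgraph.IsPerfectMatching

section Gluing

variable {V W : Type*} {G : SimpleGraph V} {K : SimpleGraph W} {x y : V} {u v : W}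

theorem gluing_adj_inr_inr {a b : W} :
    (gluing G K x y u v).Adj (inr a) (inr b) ↔ K.Adj a b ∧ s(a, b) ≠ s(u, v) := by
  simp only [gluing, fromRel_adj, ne_eq, inr.injEq, reduceCtorEq, and_false, false_and,
    exists_false, or_false, false_or]
  constructor
  · rintro ⟨-, ⟨a', b', h, hne, rfl, rfl⟩ | ⟨a', b', h, hne, rfl, rfl⟩⟩
    · exact ⟨h, hne⟩
    · exact ⟨h.symm, by rwa [Sym2.eq_swap]⟩
  · rintro ⟨h, hne⟩
    exact ⟨h.ne, Or.inl ⟨a, b, h, hne, rfl, rfl⟩⟩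

theorem gluing_adj_inl_inr {a : V} {b : W} :
    (gluing G K x y u v).Adj (inl a) (inr b) ↔ a = x ∧ b = u ∨ a = y ∧ b = v := by
  simp only [gluing, fromRel_adj]
  aesop

theorem SimpleGraph.Subgraph.IsPerfectMatching.gluing_adj_cross_iff [Finite V]
    (hV : Even (Nat.card V)) (hxy : x ≠ y) {M : (gluing G K x y u v).Subgraph}
    (hM : M.IsPerfectMatching) :
    M.Adj (inl x) (inr u) ↔ M.Adj (inl y) (inr v) :=
  ⟨hM.adj_inl_inr_of_adj_inl_inr hV hxy fun _ _ h => gluing_adj_inl_inr.mp h,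
    hM.adj_inl_inr_of_adj_inl_inr hV hxy.symm fun _ _ h => (gluing_adj_inl_inr.mp h).symm⟩

def gluingRestrictRight (huv : K.Adj u v) (M : (gluing G K x y u v).Subgraph) : K.Subgraph where
  verts := Set.univ
  Adj a b := M.Adj (inr a) (inr b) ∨ M.Adj (inl x) (inr u) ∧ s(a, b) = s(u, v)
  adj_sub := by
    rintro a b (h | ⟨-, h⟩)
    · exact (gluing_adj_inr_inr.mp (M.adj_sub h)).1
    · rwa [← mem_edgeSet, h]
  edge_vert _ := Set.mem_univ _
  symm := ⟨fun _ _ => Or.imp Subgraph.Adj.symm fun h => ⟨h.1, by rw [Sym2.eq_swap, h.2]⟩⟩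

theorem SimpleGraph.Subgraph.IsPerfectMatching.gluingRestrictRight [Finite V]
    (hV : Even (Nat.card V)) (hxy : x ≠ y) (huv : K.Adj u v)
    {M : (gluing G K x y u v).Subgraph} (hM : M.IsPerfectMatching) :
    (gluingRestrictRight huv M).IsPerfectMatching := by
  have hcross := hM.gluing_adj_cross_iff hV hxy
  rw [Subgraph.isPerfectMatching_iff]
  intro a
  obtain ⟨z, hz, -⟩ := Subgraph.isPerfectMatching_iff.mp hM (inr a)
  cases z with
  | inr b =>
    refine ⟨b, Or.inl hz, ?_⟩
    rintro b' (h | ⟨hxu, he⟩)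
    · exact inr_injective (hM.1.eq_of_adj_left h hz)
    · exfalso
      rcases Sym2.mem_iff.mp (he ▸ Sym2.mem_mk_left a b') with rfl | rfl
      · exact inl_ne_inr (hM.1.eq_of_adj_left hxu.symm hz)
      · exact inl_ne_inr (hM.1.eq_of_adj_left (hcross.mp hxu).symm hz)
  | inl c =>
    rcases gluing_adj_inl_inr.mp (M.adj_sub hz.symm) with ⟨rfl, rfl⟩ | ⟨rfl, rfl⟩
    · refine ⟨v, Or.inr ⟨hz.symm, rfl⟩, ?_⟩
      rintro b' (h | ⟨-, he⟩)
      · exact absurd (hM.1.eq_of_adj_left h hz) inr_ne_inl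
      · exact Sym2.congr_right.mp he
    · refine ⟨u, Or.inr ⟨hcross.mpr hz.symm, Sym2.eq_swap⟩, ?_⟩
      rintro b' (h | ⟨-, he⟩)
      · exact absurd (hM.1.eq_of_adj_left h hz) inr_ne_inl
      · exact Sym2.congr_right.mp (he.trans Sym2.eq_swap)

theorem coverByPM_of_coverByPM_gluing [Finite V] (hV : Even (Nat.card V)) (hxy : x ≠ y)
    (huv : K.Adj u v) {k : ℕ} (hcover : CoverByPM (gluing G K x y u v) k) : CoverByPM K k := by
  obtain ⟨M, hM, hcov⟩ := hcover
  have adj_cover {p q} (h : (gluing G K x y u v).Adj p q) : ∃ i, (M i).Adj p q := by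
    rwa [← mem_edgeSet, ← hcov, Set.mem_iUnion] at h
  refine ⟨fun i => gluingRestrictRight huv (M i), fun i => (hM i).gluingRestrictRight hV hxy huv,
    subset_antisymm (Set.iUnion_subset fun i => Subgraph.edgeSet_subset _) ?_⟩
  intro e he
  induction e using Sym2.ind with | _ a b => ?_
  simp only [Set.mem_iUnion, Subgraph.mem_edgeSet, mem_edgeSet] at he ⊢
  by_cases hab : s(a, b) = s(u, v)
  · obtain ⟨i, hi⟩ := adj_cover (gluing_adj_inl_inr.mpr (Or.inl ⟨rfl, rfl⟩))
    exact ⟨i, Or.inr ⟨hi, hab⟩⟩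
  · obtain ⟨i, hi⟩ := adj_cover (gluing_adj_inr_inr.mpr ⟨he, hab⟩)
    exact ⟨i, Or.inl hi⟩

end Gluing

theorem excessiveIndex_le_of_coverByPM_imp {V W : Type*} {G : SimpleGraph V} {H : SimpleGraph W}
    (h : ∀ k, CoverByPM H k → CoverByPM G k) : excessiveIndex G ≤ excessiveIndex H :=
  sInf_le_sInf fun _ ⟨n, hn, hcover⟩ => ⟨n, hn, h n hcover⟩

theorem gluing_coverByPM_general {V W : Type} [Fintype V]
    (G : SimpleGraph V) (K : SimpleGraph W) (x y : V) (u v : W)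
    (hGc : IsCubic G) (hxy : G.Adj x y) (huv : K.Adj u v) :
    (∀ k : ℕ, CoverByPM (gluing G K x y u v) k → CoverByPM K k) ∧
    excessiveIndex K ≤ excessiveIndex (gluing G K x y u v) := by
  have hV : Even (Nat.card V) := Nat.card_eq_fintype_card (α := V) ▸ hGc.even_card
  have hcover : ∀ k, CoverByPM (gluing G K x y u v) k → CoverByPM K k := fun _ =>
    coverByPM_of_coverByPM_gluing hV hxy.ne huv
  exact ⟨hcover, excessiveIndex_le_of_coverByPM_imp hcover⟩

/-- If the gluing of `(G,x,y)` and `(K,u,v)` can be covered by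
`k` perfect matchings, then so can `K`; in particular `χ'ₑ(K) ≤ χ'ₑ(H)` for the
glued graph `H`. -/
theorem gluing_coverByPM {V W : Type} [Fintype V] [Fintype W]
    (G : SimpleGraph V) (K : SimpleGraph W) (x y : V) (u v : W)
    (hGc : IsCubic G) (hGb : IsBridgeless G) (hKc : IsCubic K) (hKb : IsBridgeless K)
    (hxy : G.Adj x y) (huv : K.Adj u v) :
    (∀ k : ℕ, CoverByPM (gluing G K x y u v) k → CoverByPM K k) ∧
    excessiveIndex K ≤ excessiveIndex (gluing G K x y u v) :=
  gluing_coverByPM_general G K x y u v hGc hxy huv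
end

section
/- Let G be obtained from snarks G_0, G_1, G_2 by the windmill construction. Then every perfect matching M of G satisfies |M ∩ ∂H_i| ∈ {0,2} for each i, and M is of type 2 on at most one H_i, of type 0 on exactly one H_i, and of type 1 on at least one H_i. -/
open SimpleGraph

/-- The data for the windmill construction: three graphs `G i`, each with a
distinguished edge `x i — y i`, where `x0 i, x1 i` are the two neighbours of
`x i` other than `y i`, and `y0 i, y1 i` the two neighbours of `y i` other
than `x i`. -/
structure WindmillData where
  V : Fin 3 → Type
  G : ∀ i, SimpleGraph (V i)
  x : ∀ i, V i
  y : ∀ i, V i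
  x0 : ∀ i, V i
  x1 : ∀ i, V i
  y0 : ∀ i, V i
  y1 : ∀ i, V i
  adj_xy : ∀ i, (G i).Adj (x i) (y i)
  adj_xx0 : ∀ i, (G i).Adj (x i) (x0 i)
  adj_xx1 : ∀ i, (G i).Adj (x i) (x1 i)
  adj_yy0 : ∀ i, (G i).Adj (y i) (y0 i)
  adj_yy1 : ∀ i, (G i).Adj (y i) (y1 i)
  x0_ne_x1 : ∀ i, x0 i ≠ x1 i
  y0_ne_y1 : ∀ i, y0 i ≠ y1 i
  x0_ne_y : ∀ i, x0 i ≠ y i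
  x1_ne_y : ∀ i, x1 i ≠ y i
  y0_ne_x : ∀ i, y0 i ≠ x i
  y1_ne_x : ∀ i, y1 i ≠ x i

namespace WindmillData

variable (D : WindmillData)

/-- The vertices of `H i = G i − {x i, y i}`. -/
def HVert (i : Fin 3) : Type := {v : D.V i // v ≠ D.x i ∧ v ≠ D.y i}

/-- The vertices of the windmill graph: the vertices of `H 0, H 1, H 2`,
the nine new vertices `a i, b i, c i` and the new vertex `u`. -/
def Vert : Type := (Σ i : Fin 3, D.HVert i) ⊕ ((Fin 3 × Fin 3) ⊕ Unit)

/-- A vertex of `H i`, as a vertex of the windmill graph. -/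
def hv {i : Fin 3} (v : D.HVert i) : D.Vert := Sum.inl ⟨i, v⟩
/-- The new vertex `a i`. -/
def av (i : Fin 3) : D.Vert := Sum.inr (Sum.inl (i, 0))
/-- The new vertex `b i`. -/
def bv (i : Fin 3) : D.Vert := Sum.inr (Sum.inl (i, 1))
/-- The new vertex `c i`. -/
def cv (i : Fin 3) : D.Vert := Sum.inr (Sum.inl (i, 2))
/-- The new vertex `u`. -/
def uv : D.Vert := Sum.inr (Sum.inr ())

/-- The vertex `x i ^ 0` of `H i`. -/
def x0v (i : Fin 3) : D.Vert := D.hv ⟨D.x0 i, (D.adj_xx0 i).ne', D.x0_ne_y i⟩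
/-- The vertex `x i ^ 1` of `H i`. -/
def x1v (i : Fin 3) : D.Vert := D.hv ⟨D.x1 i, (D.adj_xx1 i).ne', D.x1_ne_y i⟩
/-- The vertex `y i ^ 0` of `H i`. -/
def y0v (i : Fin 3) : D.Vert := D.hv ⟨D.y0 i, D.y0_ne_x i, (D.adj_yy0 i).ne'⟩
/-- The vertex `y i ^ 1` of `H i`. -/
def y1v (i : Fin 3) : D.Vert := D.hv ⟨D.y1 i, D.y1_ne_x i, (D.adj_yy1 i).ne'⟩

/-- The adjacency relation of the windmill construction: edges inside each `H i`;
`a i` joined to `x (i+1) ^ 0` and `y (i-1) ^ 0`; `b i` joined to `x (i+1) ^ 1`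
and `y (i-1) ^ 1`; and `c i` joined to `a i`, `b i` and `u`. -/
def rel : D.Vert → D.Vert → Prop := fun p q =>
  (∃ (i : Fin 3) (v w : D.HVert i), (D.G i).Adj v.1 w.1 ∧ p = D.hv v ∧ q = D.hv w) ∨
  (∃ i : Fin 3, p = D.av i ∧ q = D.x0v (i + 1)) ∨
  (∃ i : Fin 3, p = D.av i ∧ q = D.y0v (i - 1)) ∨
  (∃ i : Fin 3, p = D.bv i ∧ q = D.x1v (i + 1)) ∨
  (∃ i : Fin 3, p = D.bv i ∧ q = D.y1v (i - 1)) ∨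
  (∃ i : Fin 3, p = D.cv i ∧ (q = D.av i ∨ q = D.bv i ∨ q = D.uv))

/-- The graph obtained from `G 0, G 1, G 2` by the windmill construction. -/
def graph : SimpleGraph D.Vert := SimpleGraph.fromRel D.rel

/-- The set of vertices of `H i` inside the windmill graph. -/
def Hset (i : Fin 3) : Set D.Vert := {p | ∃ v : D.HVert i, p = D.hv v}

/-- The set `A i = {a i, b i, c i}`. -/
def Aset (i : Fin 3) : Set D.Vert := {D.av i, D.bv i, D.cv i}

/-- A set of edges is of type 0 on `H i` if it misses `∂ H i`. -/
def Type0On (M : Set (Sym2 D.Vert)) (i : Fin 3) : Prop :=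
  (M ∩ edgeBoundary D.graph (D.Hset i)).ncard = 0

/-- A set of edges is of type 1 on `H i` if it has exactly one edge to
`A (i-1)` and exactly one edge to `A (i+1)`. -/
def Type1On (M : Set (Sym2 D.Vert)) (i : Fin 3) : Prop :=
  (M ∩ edgesBetween D.graph (D.Hset i) (D.Aset (i - 1))).ncard = 1 ∧
  (M ∩ edgesBetween D.graph (D.Hset i) (D.Aset (i + 1))).ncard = 1

/-- A set of edges is of type 2 on `H i` if it has exactly two edges in
`∂ H i` but is not of type 1. -/
def Type2On (M : Set (Sym2 D.Vert)) (i : Fin 3) : Prop :=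
  (M ∩ edgeBoundary D.graph (D.Hset i)).ncard = 2 ∧ ¬ D.Type1On M i

/-- For `i ≠ j`, the edge connecting `H i` to `a j`. -/
def eEdge (i j : Fin 3) : Sym2 D.Vert :=
  if i = j + 1 then s(D.av j, D.x0v i) else s(D.av j, D.y0v i)

/-- For `i ≠ j`, the edge connecting `H i` to `b j`. -/
def fEdge (i j : Fin 3) : Sym2 D.Vert :=
  if i = j + 1 then s(D.bv j, D.x1v i) else s(D.bv j, D.y1v i)

end WindmillData

/-!
The vertex `u` is matched to some `c i₀`, and every other `c j` to `a j` or `b j`. So `A i₀` sends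
two matching edges into `H (i₀ + 1) ∪ H (i₀ - 1)` and every other `A j` sends one: four in all.
The edges leaving `H i` go to `A (i - 1) ∪ A (i + 1)`, so at most three of the four lie in
`∂ H i`; and their number is even, since `H i` has `|V (G i)| - 2` vertices and a cubic graph has
even order. Hence the four edges split as `2 + 2 + 0` over the `H i`, and the types are read off
from which `A j` the edges at each `H i` come from.
-/

section EdgeSets

variable {V : Type*} {G : SimpleGraph V} {S T U : Set V}

lemma edgesBetween_comm : edgesBetween G S T = edgesBetween G T S := by
  ext e
  constructor <;> rintro ⟨a, b, h, ha, hb, rfl⟩ <;> exact ⟨b, a, h.symm, hb, ha, Sym2.eq_swap⟩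

lemma edgesBetween_union_right :
    edgesBetween G S (T ∪ U) = edgesBetween G S T ∪ edgesBetween G S U := by
  ext e
  constructor
  · rintro ⟨a, b, h, ha, hb | hb, rfl⟩
    exacts [Or.inl ⟨a, b, h, ha, hb, rfl⟩, Or.inr ⟨a, b, h, ha, hb, rfl⟩]
  · rintro (⟨a, b, h, ha, hb, rfl⟩ | ⟨a, b, h, ha, hb, rfl⟩)
    exacts [⟨a, b, h, ha, Or.inl hb, rfl⟩, ⟨a, b, h, ha, Or.inr hb, rfl⟩]

lemma disjoint_edgesBetween (hSU : Disjoint S U) (hTU : Disjoint T U) :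
    Disjoint (edgesBetween G S T) (edgesBetween G S U) := by
  refine Set.disjoint_left.2 ?_
  rintro _ ⟨a, b, -, ha, hb, rfl⟩ ⟨a', c, -, -, hc, he⟩
  rcases Sym2.eq_iff.1 he with ⟨-, rfl⟩ | ⟨rfl, -⟩
  exacts [hTU.notMem_of_mem_left hb hc, hSU.notMem_of_mem_left ha hc]

lemma edgeBoundary_eq_edgesBetween (hST : Disjoint S T)
    (hT : ∀ p ∈ S, ∀ q ∉ S, G.Adj p q → q ∈ T) : edgeBoundary G S = edgesBetween G S T := by
  ext e
  constructor
  · rintro ⟨a, b, h, ha, hb, rfl⟩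
    exact ⟨a, b, h, ha, hT a ha b hb h, rfl⟩
  · rintro ⟨a, b, h, ha, hb, rfl⟩
    exact ⟨a, b, h, ha, hST.notMem_of_mem_right hb, rfl⟩

end EdgeSets

lemma IsCubic.even_natCard {V : Type*} [Finite V] {G : SimpleGraph V} (hG : IsCubic G) :
    Even (Nat.card V) := by
  classical
  have := Fintype.ofFinite V
  have hodd : ∀ v, Odd (G.degree v) := fun v => by
    rw [← card_neighborSet_eq_degree, ← Nat.card_eq_fintype_card, Nat.card_coe_set_eq, hG v]
    decide
  simpa [hodd, Nat.card_eq_fintype_card] using G.even_card_odd_degree_vertices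

namespace SimpleGraph.Subgraph.IsPerfectMatching

variable {V : Type*} {G : SimpleGraph V} {M : G.Subgraph} (hM : M.IsPerfectMatching)

noncomputable def mate (v : V) : V := (hM.1 (hM.2 v)).choose

lemma adj_mate (v : V) : M.Adj v (hM.mate v) := (hM.1 (hM.2 v)).choose_spec.1

lemma mate_mem_neighborSet (v : V) : hM.mate v ∈ G.neighborSet v := M.adj_sub (hM.adj_mate v)

lemma eq_mate_of_adj {v w : V} (h : M.Adj v w) : w = hM.mate v :=
  (hM.1 (hM.2 v)).choose_spec.2 w h

lemma mate_mate (v : V) : hM.mate (hM.mate v) = v :=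
  (hM.eq_mate_of_adj (hM.adj_mate v).symm).symm

lemma mate_eq_comm {v w : V} : hM.mate v = w ↔ hM.mate w = v := by
  constructor <;> rintro rfl <;> exact hM.mate_mate _

lemma inter_edgesBetween (A B : Set V) :
    M.edgeSet ∩ edgesBetween G A B = (fun a => s(a, hM.mate a)) '' {a ∈ A | hM.mate a ∈ B} := by
  ext e
  constructor
  · rintro ⟨he, a, b, -, ha, hb, rfl⟩
    obtain rfl := hM.eq_mate_of_adj (Subgraph.mem_edgeSet.1 he)
    exact ⟨a, ⟨ha, hb⟩, rfl⟩
  · rintro ⟨a, ⟨ha, hb⟩, rfl⟩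
    exact ⟨hM.adj_mate a, a, _, M.adj_sub (hM.adj_mate a), ha, hb, rfl⟩

lemma ncard_inter_edgesBetween {A B : Set V} (hAB : Disjoint A B) :
    (M.edgeSet ∩ edgesBetween G A B).ncard = {a ∈ A | hM.mate a ∈ B}.ncard := by
  rw [hM.inter_edgesBetween]
  refine Set.InjOn.ncard_image fun a ha a' ha' he => ?_
  rcases Sym2.eq_iff.1 he with ⟨h, -⟩ | ⟨h, -⟩
  · exact h
  · exact absurd (h ▸ ha.1) (hAB.notMem_of_mem_right ha'.2)

lemma even_ncard_inter_preimage_mate [Finite V] (S : Set V) :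
    Even (S ∩ hM.mate ⁻¹' S).ncard := by
  classical
  have := Fintype.ofFinite V
  have hT : (M.induce (S ∩ hM.mate ⁻¹' S)).IsMatching := by
    intro v hv
    refine ⟨hM.mate v, ⟨hv, ⟨hv.2, by rw [Set.mem_preimage, hM.mate_mate]; exact hv.1⟩,
      hM.adj_mate v⟩, ?_⟩
    rintro w ⟨-, -, h⟩
    exact hM.eq_mate_of_adj h
  simpa [Set.ncard_eq_toFinset_card'] using hT.even_card

lemma even_ncard_inter_edgeBoundary [Finite V] (hM : M.IsPerfectMatching) {S : Set V}
    (hS : Even S.ncard) : Even (M.edgeSet ∩ edgeBoundary G S).ncard := by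
  rw [edgeBoundary, hM.ncard_inter_edgesBetween disjoint_compl_right]
  rw [← Set.ncard_inter_add_ncard_sdiff_eq_ncard S (hM.mate ⁻¹' S), Nat.even_add] at hS
  exact hS.1 (hM.even_ncard_inter_preimage_mate S)

end SimpleGraph.Subgraph.IsPerfectMatching

lemma fin_three_sub_one_ne_add_one (i : Fin 3) : i - 1 ≠ i + 1 := by
  revert i
  decide

lemma ncard_setOf_fin_three (P : Fin 3 → Prop) [DecidablePred P] :
    {i | P i}.ncard = (if P 0 then 1 else 0) + (if P 1 then 1 else 0) + (if P 2 then 1 else 0) := by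
  rw [Set.ncard_eq_toFinset_card', Set.toFinset_ofPred, Finset.card_filter, Fin.sum_univ_three]

/-- `m i` and `p i` count the matching edges from `H i` to `A (i - 1)` and to `A (i + 1)`. -/
lemma windmill_profile_of_counts (m p : Fin 3 → ℕ) (i₀ : Fin 3) (hpar : ∀ i, Even (m i + p i))
    (hsrc : ∀ j, m (j + 1) + p (j - 1) = if j = i₀ then 2 else 1) :
    (∀ i, m i + p i = 0 ∨ m i + p i = 2) ∧
    {i | m i + p i = 2 ∧ ¬(m i = 1 ∧ p i = 1)}.ncard ≤ 1 ∧
    {i | m i + p i = 0}.ncard = 1 ∧ 1 ≤ {i | m i = 1 ∧ p i = 1}.ncard := by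
  classical
  have h₀ : m 1 + p 2 = if 0 = i₀ then 2 else 1 := hsrc 0
  have h₁ : m 2 + p 0 = if 1 = i₀ then 2 else 1 := hsrc 1
  have h₂ : m 0 + p 1 = if 2 = i₀ then 2 else 1 := hsrc 2
  have e₀ := Nat.even_iff.1 (hpar 0)
  have e₁ := Nat.even_iff.1 (hpar 1)
  have e₂ := Nat.even_iff.1 (hpar 2)
  simp only [ncard_setOf_fin_three]
  fin_cases i₀ <;>
    simp only [Fin.reduceFinMk, Fin.isValue, Fin.reduceEq, if_true, if_false] at h₀ h₁ h₂ <;>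
    refine ⟨fun i => by fin_cases i <;> simp only [Fin.zero_eta, Fin.mk_one, Fin.reduceFinMk] <;>
      omega, ?_, ?_, ?_⟩ <;>
    split_ifs <;> omega

namespace WindmillData

variable {D : WindmillData} {i j : Fin 3}

lemma finite_Vert (hfin : ∀ i, Finite (D.V i)) : Finite D.Vert := by
  have := hfin
  unfold Vert HVert
  infer_instance

lemma hv_injective : Function.Injective (D.hv (i := i)) := by
  rintro v w ⟨⟩
  rfl

lemma av_ne_bv : D.av j ≠ D.bv j := by rintro ⟨⟩

lemma av_not_mem_Hset : D.av j ∉ D.Hset i := by rintro ⟨_, ⟨⟩⟩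
lemma bv_not_mem_Hset : D.bv j ∉ D.Hset i := by rintro ⟨_, ⟨⟩⟩
lemma cv_not_mem_Hset : D.cv j ∉ D.Hset i := by rintro ⟨_, ⟨⟩⟩
lemma uv_not_mem_Hset : D.uv ∉ D.Hset i := by rintro ⟨_, ⟨⟩⟩

lemma disjoint_Hset (h : i ≠ j) : Disjoint (D.Hset i) (D.Hset j) := by
  refine Set.disjoint_left.2 ?_
  rintro _ ⟨v, rfl⟩ ⟨w, ⟨⟩⟩
  exact h rfl

lemma disjoint_Aset (h : i ≠ j) : Disjoint (D.Aset i) (D.Aset j) := by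
  refine Set.disjoint_left.2 ?_
  rintro _ (rfl | rfl | rfl) (⟨⟨⟩⟩ | ⟨⟨⟩⟩ | ⟨⟨⟩⟩) <;> exact h rfl

lemma disjoint_Hset_Aset : Disjoint (D.Hset i) (D.Aset j) := by
  refine Set.disjoint_right.2 ?_
  rintro _ (rfl | rfl | rfl)
  exacts [av_not_mem_Hset, bv_not_mem_Hset, cv_not_mem_Hset]

lemma ncard_Hset_add_two [Finite (D.V i)] : (D.Hset i).ncard + 2 = Nat.card (D.V i) := by
  have hrange : D.Hset i = Set.range (D.hv (i := i)) := by
    ext; exact ⟨fun ⟨v, h⟩ => ⟨v, h.symm⟩, fun ⟨v, h⟩ => ⟨v, h.symm⟩⟩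
  have hcompl : Nat.card (D.HVert i) = ({D.x i, D.y i}ᶜ : Set (D.V i)).ncard := by
    rw [← Nat.card_coe_set_eq]
    exact Nat.card_congr (Equiv.subtypeEquivRight fun v => by simp)
  rw [hrange, Set.ncard_range_of_injective hv_injective, hcompl,
    ← Set.ncard_pair (D.adj_xy i).ne, Set.ncard_compl_add_ncard]

lemma even_ncard_Hset [Finite (D.V i)] (hG : IsCubic (D.G i)) : Even (D.Hset i).ncard := by
  have := hG.even_natCard
  rw [← ncard_Hset_add_two, Nat.even_add] at this
  exact this.2 even_two

/- Below, an adjacency is unfolded into the clauses of `rel` in both directions; the `⟨⟩`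
patterns discard the clauses that equate vertices built from different constructors of `Vert`. -/

lemma neighborSet_uv_subset : D.graph.neighborSet D.uv ⊆ Set.range D.cv := by
  rintro w ⟨-, h | h⟩
  · rcases h with ⟨_, _, _, _, ⟨⟩, _⟩ | ⟨_, ⟨⟩, _⟩ | ⟨_, ⟨⟩, _⟩ | ⟨_, ⟨⟩, _⟩ | ⟨_, ⟨⟩, _⟩ |
      ⟨_, ⟨⟩, _⟩
  · rcases h with ⟨_, _, _, _, _, ⟨⟩⟩ | ⟨_, _, ⟨⟩⟩ | ⟨_, _, ⟨⟩⟩ | ⟨_, _, ⟨⟩⟩ | ⟨_, _, ⟨⟩⟩ |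
      ⟨j, rfl, -⟩
    exact ⟨j, rfl⟩

lemma neighborSet_cv_subset : D.graph.neighborSet (D.cv j) ⊆ {D.av j, D.bv j, D.uv} := by
  rintro w ⟨-, h | h⟩
  · rcases h with ⟨_, _, _, _, ⟨⟩, _⟩ | ⟨_, ⟨⟩, _⟩ | ⟨_, ⟨⟩, _⟩ | ⟨_, ⟨⟩, _⟩ | ⟨_, ⟨⟩, _⟩ |
      ⟨_, ⟨⟩, hw⟩
    exact hw
  · rcases h with ⟨_, _, _, _, _, ⟨⟩⟩ | ⟨_, _, ⟨⟩⟩ | ⟨_, _, ⟨⟩⟩ | ⟨_, _, ⟨⟩⟩ | ⟨_, _, ⟨⟩⟩ |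
      ⟨_, _, ⟨⟨⟩⟩ | ⟨⟨⟩⟩ | ⟨⟨⟩⟩⟩

lemma neighborSet_av_subset :
    D.graph.neighborSet (D.av j) ⊆ insert (D.cv j) (D.Hset (j + 1) ∪ D.Hset (j - 1)) := by
  rintro w ⟨-, h | h⟩
  · rcases h with ⟨_, _, _, _, ⟨⟩, _⟩ | ⟨_, ⟨⟩, rfl⟩ | ⟨_, ⟨⟩, rfl⟩ | ⟨_, ⟨⟩, _⟩ | ⟨_, ⟨⟩, _⟩ |
      ⟨_, ⟨⟩, _⟩
    exacts [Or.inr (Or.inl ⟨_, rfl⟩), Or.inr (Or.inr ⟨_, rfl⟩)]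
  · rcases h with ⟨_, _, _, _, _, ⟨⟩⟩ | ⟨_, _, ⟨⟩⟩ | ⟨_, _, ⟨⟩⟩ | ⟨_, _, ⟨⟩⟩ | ⟨_, _, ⟨⟩⟩ |
      ⟨_, rfl, ⟨⟨⟩⟩ | ⟨⟨⟩⟩ | ⟨⟨⟩⟩⟩
    exact Or.inl rfl

lemma neighborSet_bv_subset :
    D.graph.neighborSet (D.bv j) ⊆ insert (D.cv j) (D.Hset (j + 1) ∪ D.Hset (j - 1)) := by
  rintro w ⟨-, h | h⟩
  · rcases h with ⟨_, _, _, _, ⟨⟩, _⟩ | ⟨_, ⟨⟩, _⟩ | ⟨_, ⟨⟩, _⟩ | ⟨_, ⟨⟩, rfl⟩ | ⟨_, ⟨⟩, rfl⟩ |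
      ⟨_, ⟨⟩, _⟩
    exacts [Or.inr (Or.inl ⟨_, rfl⟩), Or.inr (Or.inr ⟨_, rfl⟩)]
  · rcases h with ⟨_, _, _, _, _, ⟨⟩⟩ | ⟨_, _, ⟨⟩⟩ | ⟨_, _, ⟨⟩⟩ | ⟨_, _, ⟨⟩⟩ | ⟨_, _, ⟨⟩⟩ |
      ⟨_, rfl, ⟨⟨⟩⟩ | ⟨⟨⟩⟩ | ⟨⟨⟩⟩⟩
    exact Or.inl rfl

lemma mem_Aset_of_adj_of_mem_Hset {p q : D.Vert} (hp : p ∈ D.Hset i) (hq : q ∉ D.Hset i)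
    (h : D.graph.Adj p q) : q ∈ D.Aset (i - 1) ∪ D.Aset (i + 1) := by
  obtain ⟨v, rfl⟩ := hp
  obtain ⟨-, h | h⟩ := h
  · rcases h with ⟨_, _, w, _, ⟨⟩, rfl⟩ | ⟨_, ⟨⟩, _⟩ | ⟨_, ⟨⟩, _⟩ | ⟨_, ⟨⟩, _⟩ | ⟨_, ⟨⟩, _⟩ |
      ⟨_, ⟨⟩, _⟩
    exact absurd ⟨w, rfl⟩ hq
  · rcases h with ⟨_, w, _, _, rfl, ⟨⟩⟩ | ⟨k, rfl, ⟨⟩⟩ | ⟨k, rfl, ⟨⟩⟩ | ⟨k, rfl, ⟨⟩⟩ |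
      ⟨k, rfl, ⟨⟩⟩ | ⟨_, rfl, ⟨⟨⟩⟩ | ⟨⟨⟩⟩ | ⟨⟨⟩⟩⟩
    · exact absurd ⟨w, rfl⟩ hq
    all_goals simp [Aset]

lemma edgeBoundary_Hset : edgeBoundary D.graph (D.Hset i) =
    edgesBetween D.graph (D.Hset i) (D.Aset (i - 1)) ∪
      edgesBetween D.graph (D.Hset i) (D.Aset (i + 1)) := by
  rw [edgeBoundary_eq_edgesBetween (disjoint_Hset_Aset.union_right disjoint_Hset_Aset)
    fun _ hp _ hq h => mem_Aset_of_adj_of_mem_Hset hp hq h, edgesBetween_union_right]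

variable {M : D.graph.Subgraph}

lemma ncard_inter_edgeBoundary_Hset [Finite D.Vert] :
    (M.edgeSet ∩ edgeBoundary D.graph (D.Hset i)).ncard =
      (M.edgeSet ∩ edgesBetween D.graph (D.Hset i) (D.Aset (i - 1))).ncard +
        (M.edgeSet ∩ edgesBetween D.graph (D.Hset i) (D.Aset (i + 1))).ncard := by
  rw [edgeBoundary_Hset, Set.inter_union_distrib_left, Set.ncard_union_eq]
  exact (disjoint_edgesBetween disjoint_Hset_Aset
    (disjoint_Aset (fin_three_sub_one_ne_add_one i))).mono Set.inter_subset_right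
    Set.inter_subset_right

variable (hM : M.IsPerfectMatching)

lemma sep_Aset_mate_mem_Hset :
    {w ∈ D.Aset j | hM.mate w ∈ D.Hset (j + 1) ∨ hM.mate w ∈ D.Hset (j - 1)} =
      {D.av j, D.bv j} \ {hM.mate (D.cv j)} := by
  ext w
  simp only [Set.mem_sep_iff, Set.mem_sdiff, Set.mem_singleton_iff, Set.mem_insert_iff]
  constructor
  · rintro ⟨hw, hmate⟩
    have hwc : w ≠ D.cv j := by
      rintro rfl
      rcases neighborSet_cv_subset (hM.mate_mem_neighborSet (D.cv j)) with h | h | h <;>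
        rw [h] at hmate
      exacts [hmate.elim av_not_mem_Hset av_not_mem_Hset,
        hmate.elim bv_not_mem_Hset bv_not_mem_Hset, hmate.elim uv_not_mem_Hset uv_not_mem_Hset]
    refine ⟨hw.imp_right (Or.resolve_right · hwc), fun h => ?_⟩
    rw [h, hM.mate_mate] at hmate
    exact hmate.elim cv_not_mem_Hset cv_not_mem_Hset
  · rintro ⟨hw, hne⟩
    refine ⟨Or.imp_right Or.inl hw, ?_⟩
    have hmate : hM.mate w ≠ D.cv j := fun h => hne (by rw [← h, hM.mate_mate])
    rcases hw with rfl | rfl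
    · exact (neighborSet_av_subset (hM.mate_mem_neighborSet _)).resolve_left hmate
    · exact (neighborSet_bv_subset (hM.mate_mem_neighborSet _)).resolve_left hmate

lemma ncard_inter_edgesBetween_Hset_Aset [Finite D.Vert] :
    (M.edgeSet ∩ edgesBetween D.graph (D.Hset (j + 1)) (D.Aset j)).ncard +
      (M.edgeSet ∩ edgesBetween D.graph (D.Hset (j - 1)) (D.Aset j)).ncard =
      ({D.av j, D.bv j} \ {hM.mate (D.cv j)} : Set D.Vert).ncard := by
  rw [edgesBetween_comm, hM.ncard_inter_edgesBetween disjoint_Hset_Aset.symm, edgesBetween_comm,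
    hM.ncard_inter_edgesBetween disjoint_Hset_Aset.symm, ← Set.ncard_union_eq, ← Set.sep_or,
    sep_Aset_mate_mem_Hset]
  exact Set.disjoint_left.2 fun w h h' =>
    (disjoint_Hset (fin_three_sub_one_ne_add_one j).symm).notMem_of_mem_left h.2 h'.2

lemma ncard_pair_sdiff_mate_cv {i₀ : Fin 3} (hu : D.cv i₀ = hM.mate D.uv) :
    ({D.av j, D.bv j} \ {hM.mate (D.cv j)} : Set D.Vert).ncard = if j = i₀ then 2 else 1 := by
  split_ifs with hj
  · subst hj
    rw [hM.mate_eq_comm.1 hu.symm, Set.sdiff_singleton_eq_self, Set.ncard_pair av_ne_bv]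
    rintro (h | h) <;> cases h
  · rw [Set.ncard_sdiff_singleton_of_mem, Set.ncard_pair av_ne_bv]
    refine (neighborSet_cv_subset (hM.mate_mem_neighborSet (D.cv j))).imp_right
      (Or.resolve_right · fun h => ?_)
    have : D.cv i₀ = D.cv j := hu.trans (hM.mate_eq_comm.1 h)
    cases this
    exact hj rfl

end WindmillData

open WindmillData in
/-- Every perfect matching `M` of a windmill graph of three
snarks satisfies `|M ∩ ∂H i| ∈ {0, 2}` for each `i`; moreover `M` is of type 2
on at most one `H i`, of type 0 on exactly one `H i`, and of type 1 on at least
one `H i`. -/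
theorem windmill_matching_types (D : WindmillData) (hfin : ∀ i, Finite (D.V i))
    (hsn : ∀ i, IsSnark (D.G i))
    (M : D.graph.Subgraph) (hM : M.IsPerfectMatching) :
    (∀ i : Fin 3, (M.edgeSet ∩ edgeBoundary D.graph (D.Hset i)).ncard = 0 ∨
       (M.edgeSet ∩ edgeBoundary D.graph (D.Hset i)).ncard = 2) ∧
    {i : Fin 3 | D.Type2On M.edgeSet i}.ncard ≤ 1 ∧
    {i : Fin 3 | D.Type0On M.edgeSet i}.ncard = 1 ∧
    1 ≤ {i : Fin 3 | D.Type1On M.edgeSet i}.ncard := by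
  have := D.finite_Vert hfin
  obtain ⟨i₀, hu⟩ := neighborSet_uv_subset (hM.mate_mem_neighborSet D.uv)
  have hpar : ∀ i, Even ((M.edgeSet ∩ edgesBetween D.graph (D.Hset i) (D.Aset (i - 1))).ncard +
      (M.edgeSet ∩ edgesBetween D.graph (D.Hset i) (D.Aset (i + 1))).ncard) := fun i => by
    have := hfin i
    rw [← ncard_inter_edgeBoundary_Hset]
    exact hM.even_ncard_inter_edgeBoundary (even_ncard_Hset (hsn i).1)
  simp only [Type0On, Type1On, Type2On, ncard_inter_edgeBoundary_Hset]
  refine windmill_profile_of_counts _ _ i₀ hpar fun j => ?_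
  simp only [add_sub_cancel_right, sub_add_cancel]
  exact (ncard_inter_edgesBetween_Hset_Aset hM).trans (ncard_pair_sdiff_mate_cv hM hu)
end
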